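/- Let N be a network over time and T ∈ ℕ a time horizon such that every s-t path p in N has transit time τ(p) ≤ T/2 (long time horizon). Then every temporally repeated flow f with time horizon T associated with a static flow x has peak cost c^max(f) = Σ_{a ∈ A} c_a · τ_a · x(a), and this peak cost is attained at the time point ⌊T/2⌋, i.e., c(f, ⌊T/2⌋) = c^max(f). -/

import Mathlib

open MeasureTheory

/-- A network over time: a digraph with arc capacities `u`, costs `c`,
transit times `τ`, a source `s` and a sink `t`. -/
structure Network (V : Type) (A : Type) where
  tail : A → V
  head : A → V
  u : A → ℕ
  c : A → ℕ
  τ : A → ℕ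
  s : V
  t : V

namespace Network

variable {V A : Type}

/-- The node sequence visited by a list of arcs. -/
def nodes (N : Network V A) : List A → List V
  | [] => []
  | a :: rest => N.tail a :: ((a :: rest).map N.head)

/-- `p` is a simple `s`-`t` path (a non-empty list of consecutive arcs starting at
the source, ending at the sink and visiting pairwise distinct nodes). -/
def IsSTPath (N : Network V A) (p : List A) : Prop :=
  p ≠ [] ∧ List.Chain' (fun a b => N.head a = N.tail b) p ∧
    (∀ a ∈ p.head?, N.tail a = N.s) ∧ (∀ a ∈ p.getLast?, N.head a = N.t) ∧
    (N.nodes p).Nodup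

/-- `p` is a non-empty closed walk, i.e. a cycle. -/
def IsCycle (N : Network V A) (p : List A) : Prop :=
  p ≠ [] ∧ List.Chain' (fun a b => N.head a = N.tail b) p ∧
    ∀ a ∈ p.head?, ∀ b ∈ p.getLast?, N.head b = N.tail a

/-- The network contains no directed cycle. -/
def Acyclic (N : Network V A) : Prop := ∀ p : List A, ¬ N.IsCycle p

/-- Transit time (length) of a path. -/
def pathTime (N : Network V A) (p : List A) : ℕ := (p.map N.τ).sum

/-- Bottleneck capacity of a path. -/
noncomputable def bottleneck (N : Network V A) (p : List A) : ℕ :=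
  sInf (N.u '' {a | a ∈ p})

section
variable [DecidableEq A]

/-- Transit time of the part of `p` strictly before arc `a`. -/
def prefixTime (N : Network V A) (p : List A) (a : A) : ℕ :=
  ((p.takeWhile fun b => b ≠ a).map N.τ).sum

/-- Transit time of the part of `p` from arc `a` onwards. -/
def suffixTime (N : Network V A) (p : List A) (a : A) : ℕ :=
  ((p.dropWhile fun b => b ≠ a).map N.τ).sum

/-- Inflow rate into arc `a` at time `θ` of the temporally repeated flow with
horizon `T` induced by the path decomposition `y`. -/
noncomputable def trRate (N : Network V A) (y : List A → ℝ) (T : ℝ) (a : A) (θ : ℝ) : ℝ :=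
  ∑ᶠ p ∈ {p : List A | N.IsSTPath p ∧ (N.pathTime p : ℝ) ≤ T ∧ a ∈ p ∧
    (N.prefixTime p a : ℝ) ≤ θ ∧ (N.suffixTime p a : ℝ) < T - θ}, y p

/-- Static flow on arc `a` induced by the path decomposition `y`. -/
noncomputable def staticOf (N : Network V A) (y : List A → ℝ) (a : A) : ℝ :=
  ∑ᶠ p ∈ {p : List A | a ∈ p}, y p

/-- `y` is a feasible (capacity-respecting) path decomposition of a static flow. -/
def IsDecomposition (N : Network V A) (y : List A → ℝ) : Prop :=
  (∀ p, 0 ≤ y p) ∧ (∀ p, y p ≠ 0 → N.IsSTPath p) ∧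
    (Function.support y).Finite ∧ ∀ a : A, N.staticOf y a ≤ N.u a

/-- Value of the temporally repeated flow induced by `y` with horizon `T`. -/
noncomputable def trValue (N : Network V A) (y : List A → ℝ) (T : ℝ) : ℝ :=
  ∑ᶠ p ∈ {p : List A | N.IsSTPath p ∧ (N.pathTime p : ℝ) ≤ T}, y p * (T - N.pathTime p)

/-- Amount of flow of the TR flow induced by `y` that has reached the sink by time `θ`. -/
noncomputable def arrTR (N : Network V A) (y : List A → ℝ) (θ : ℝ) : ℝ :=
  ∑ᶠ p ∈ {p : List A | N.IsSTPath p ∧ (N.pathTime p : ℝ) ≤ θ}, y p * (θ - N.pathTime p)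

end

/-- All flow rates of the decomposition are (nonnegative) integers. -/
def IsIntegral (y : List A → ℝ) : Prop := ∀ p, ∃ n : ℕ, y p = n

section
variable [Fintype A]

/-- Cost of a flow over time `f` at time point `θ`. -/
noncomputable def costAt (N : Network V A) (f : A → ℝ → ℝ) (θ : ℝ) : ℝ :=
  ∑ a : A, (N.c a : ℝ) * ∫ ξ in (θ - (N.τ a : ℝ))..θ, f a ξ

/-- Peak cost of a flow over time `f` with horizon `T`. -/
noncomputable def peakCost (N : Network V A) (f : A → ℝ → ℝ) (T : ℝ) : ℝ :=
  sSup (N.costAt f '' Set.Ico 0 T)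

/-- Peak cost of the TR flow induced by the decomposition `y`. -/
noncomputable def trPeakCost [DecidableEq A] (N : Network V A) (y : List A → ℝ) (T : ℝ) : ℝ :=
  N.peakCost (N.trRate y T) T

variable [DecidableEq V]

/-- Cumulative flow having entered node `v` by time `θ`. -/
noncomputable def inflowBy (N : Network V A) (f : A → ℝ → ℝ) (v : V) (θ : ℝ) : ℝ :=
  ∑ a ∈ Finset.univ.filter (fun a => N.head a = v), ∫ ξ in (0:ℝ)..(θ - (N.τ a : ℝ)), f a ξ

/-- Cumulative flow having left node `v` by time `θ`. -/
noncomputable def outflowBy (N : Network V A) (f : A → ℝ → ℝ) (v : V) (θ : ℝ) : ℝ :=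
  ∑ a ∈ Finset.univ.filter (fun a => N.tail a = v), ∫ ξ in (0:ℝ)..θ, f a ξ

/-- A feasible flow over time with horizon `T`. -/
def IsFlowOverTime (N : Network V A) (T : ℝ) (f : A → ℝ → ℝ) : Prop :=
  (∀ a, Measurable (f a)) ∧ (∀ a θ, 0 ≤ f a θ) ∧ (∀ a θ, f a θ ≤ N.u a) ∧
    (∀ a θ, T - (N.τ a : ℝ) < θ → f a θ = 0) ∧ (∀ a θ, θ < 0 → f a θ = 0) ∧
    ∀ v, v ≠ N.s → v ≠ N.t → ∀ θ ∈ Set.Ico (0:ℝ) T,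
      N.outflowBy f v θ ≤ N.inflowBy f v θ

/-- Value of a flow over time with horizon `T`. -/
noncomputable def fotValue (N : Network V A) (T : ℝ) (f : A → ℝ → ℝ) : ℝ :=
  N.outflowBy f N.s T - N.inflowBy f N.s T

/-- Amount of flow of a flow over time arrived at the sink by time `θ`. -/
noncomputable def arrivedBy (N : Network V A) (f : A → ℝ → ℝ) (θ : ℝ) : ℝ :=
  N.inflowBy f N.t θ - N.outflowBy f N.t θ

/-- Feasibility of a static `s`-`t` flow. -/
def IsStaticFlow (N : Network V A) (x : A → ℝ) : Prop :=
  (∀ a, 0 ≤ x a) ∧ (∀ a, x a ≤ N.u a) ∧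
    ∀ v, v ≠ N.s → v ≠ N.t →
      ∑ a ∈ Finset.univ.filter (fun a => N.head a = v), x a =
      ∑ a ∈ Finset.univ.filter (fun a => N.tail a = v), x a

/-- Value of a static `s`-`t` flow. -/
noncomputable def staticValue (N : Network V A) (x : A → ℝ) : ℝ :=
  ∑ a ∈ Finset.univ.filter (fun a => N.tail a = N.s), x a -
  ∑ a ∈ Finset.univ.filter (fun a => N.head a = N.s), x a

end

end Network

open Network

/-!
A path `p` of the decomposition feeds arc `a` exactly during `[prefixTime p a, T - suffixTime p a)`,
so the inflow rate into `a` never exceeds `x(a)` and the cost window `(θ - τ_a, θ]` of `a`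
contributes at most `c_a τ_a x(a)`. When `τ(p) ≤ T/2` for all paths, at `θ = ⌊T/2⌋` every path
through `a` feeds `a` during the whole window, so the bound is attained.
-/

theorem List.mem_dropWhile_ne_self {α : Type*} [DecidableEq α] {a : α} :
    ∀ {l : List α}, a ∈ l → a ∈ l.dropWhile (· ≠ a)
  | b :: l, h => by
    by_cases hb : b = a
    · simp [hb]
    · simpa [List.dropWhile_cons, hb] using
        List.mem_dropWhile_ne_self ((List.mem_cons.mp h).resolve_left (Ne.symm hb))

namespace Network

variable {V A : Type} [DecidableEq A] (N : Network V A)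

theorem prefixTime_add_suffixTime (p : List A) (a : A) :
    N.prefixTime p a + N.suffixTime p a = N.pathTime p := by
  rw [prefixTime, suffixTime, pathTime, ← List.sum_append, ← List.map_append,
    List.takeWhile_append_dropWhile]

theorem τ_le_suffixTime {p : List A} {a : A} (h : a ∈ p) : N.τ a ≤ N.suffixTime p a :=
  List.le_sum_of_mem (List.mem_map_of_mem (List.mem_dropWhile_ne_self h))

theorem prefixTime_add_τ_le_pathTime {p : List A} {a : A} (h : a ∈ p) :
    N.prefixTime p a + N.τ a ≤ N.pathTime p := by
  have := N.τ_le_suffixTime h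
  have := N.prefixTime_add_suffixTime p a
  omega

theorem suffixTime_le_pathTime (p : List A) (a : A) : N.suffixTime p a ≤ N.pathTime p := by
  have := N.prefixTime_add_suffixTime p a
  omega

variable {N} {y : List A → ℝ}

theorem trRate_nonneg (hy : ∀ p, 0 ≤ y p) (T : ℝ) (a : A) (θ : ℝ) : 0 ≤ N.trRate y T a θ :=
  finsum_nonneg fun p => finsum_nonneg fun _ => hy p

theorem trRate_le_staticOf (hy : N.IsDecomposition y) (T : ℝ) (a : A) (θ : ℝ) :
    N.trRate y T a θ ≤ N.staticOf y a := by
  classical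
  rw [trRate, staticOf, finsum_mem_eq_sum_filter y _ hy.2.2.1, finsum_mem_eq_sum_filter y _ hy.2.2.1]
  refine Finset.sum_le_sum_of_subset_of_nonneg (fun p => ?_) fun p _ _ => hy.1 p
  simp only [Finset.mem_filter, Set.mem_ofPred_eq]
  exact fun h => ⟨h.1, h.2.2.2.1⟩

theorem trRate_eq_zero_of_nonpos {T : ℝ} (hT : T ≤ 0) (a : A) (θ : ℝ) : N.trRate y T a θ = 0 := by
  refine finsum_mem_eq_zero_of_forall_eq_zero fun p ⟨_, _, _, hpre, hsuf⟩ => ?_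
  linarith [(N.prefixTime p a).cast_nonneg (α := ℝ), (N.suffixTime p a).cast_nonneg (α := ℝ)]

theorem trRate_eq_staticOf (hy : N.IsDecomposition y) {T : ℝ} {a : A} {θ : ℝ}
    (hθ : ∀ p, y p ≠ 0 → a ∈ p → (N.prefixTime p a : ℝ) ≤ θ ∧ (N.suffixTime p a : ℝ) < T - θ) :
    N.trRate y T a θ = N.staticOf y a := by
  refine finsum_mem_inter_support_eq' y _ _ fun p hp => ⟨fun h => h.2.2.1, fun ha => ?_⟩
  obtain ⟨hpre, hsuf⟩ := hθ p hp ha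
  have hsplit : (N.prefixTime p a : ℝ) + N.suffixTime p a = N.pathTime p := by
    exact_mod_cast N.prefixTime_add_suffixTime p a
  exact ⟨hy.2.1 p hp, by linarith, ha, hpre, hsuf⟩

theorem integral_trRate_le (hy : N.IsDecomposition y) (T : ℝ) (a : A) (θ : ℝ) :
    ∫ ξ in θ - N.τ a..θ, N.trRate y T a ξ ≤ N.τ a * N.staticOf y a := by
  have hbound : ∀ ξ ∈ Set.uIoc (θ - N.τ a) θ, ‖N.trRate y T a ξ‖ ≤ N.staticOf y a := fun ξ _ => by
    rw [Real.norm_of_nonneg (trRate_nonneg hy.1 T a ξ)]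
    exact trRate_le_staticOf hy T a ξ
  calc _ ≤ ‖∫ ξ in θ - N.τ a..θ, N.trRate y T a ξ‖ := Real.le_norm_self _
    _ ≤ N.staticOf y a * |θ - (θ - N.τ a)| :=
        intervalIntegral.norm_integral_le_of_norm_le_const hbound
    _ = N.τ a * N.staticOf y a := by
        rw [sub_sub_cancel, abs_of_nonneg (Nat.cast_nonneg _), mul_comm]

theorem integral_trRate_eq (hy : N.IsDecomposition y) {T : ℝ} {a : A} {θ : ℝ}
    (hθ : ∀ p, y p ≠ 0 → a ∈ p →
      (N.prefixTime p a : ℝ) + N.τ a ≤ θ ∧ θ + N.suffixTime p a ≤ T) :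
    ∫ ξ in θ - N.τ a..θ, N.trRate y T a ξ = N.τ a * N.staticOf y a := by
  have hτ : θ - N.τ a ≤ θ := sub_le_self _ (Nat.cast_nonneg _)
  have hconst : Set.EqOn (N.trRate y T a) (fun _ => N.staticOf y a) (Set.Ioo (θ - N.τ a) θ) :=
    fun ξ hξ => trRate_eq_staticOf hy fun p hp ha => by
      obtain ⟨hpre, hsuf⟩ := hθ p hp ha
      constructor <;> linarith [hξ.1, hξ.2]
  rw [intervalIntegral.integral_of_le hτ, integral_Ioc_eq_integral_Ioo,
    setIntegral_congr_fun measurableSet_Ioo hconst, setIntegral_const,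
    Real.volume_real_Ioo_of_le hτ, sub_sub_cancel, smul_eq_mul]

variable [Fintype A]

theorem costAt_trRate_le (hy : N.IsDecomposition y) (T θ : ℝ) :
    N.costAt (N.trRate y T) θ ≤ ∑ a, (N.c a : ℝ) * N.τ a * N.staticOf y a :=
  Finset.sum_le_sum fun a _ => by
    rw [mul_assoc]
    exact mul_le_mul_of_nonneg_left (integral_trRate_le hy T a θ) (Nat.cast_nonneg _)

theorem costAt_trRate_eq (hy : N.IsDecomposition y) {T θ : ℝ}
    (hθ : ∀ p, y p ≠ 0 → (N.pathTime p : ℝ) ≤ θ ∧ θ + N.pathTime p ≤ T) :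
    N.costAt (N.trRate y T) θ = ∑ a, (N.c a : ℝ) * N.τ a * N.staticOf y a :=
  Finset.sum_congr rfl fun a _ => by
    rw [mul_assoc, integral_trRate_eq hy fun p hp ha => ?_]
    have hpre : (N.prefixTime p a : ℝ) + N.τ a ≤ N.pathTime p := by
      exact_mod_cast N.prefixTime_add_τ_le_pathTime ha
    have hsuf : (N.suffixTime p a : ℝ) ≤ N.pathTime p := by
      exact_mod_cast N.suffixTime_le_pathTime p a
    obtain ⟨hθ₁, hθ₂⟩ := hθ p hp
    constructor <;> linarith

end Network

theorem stmt13_general {V A : Type} [DecidableEq A] [Fintype A]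
    (N : Network V A) (T : ℕ)
    (hlong : ∀ p, N.IsSTPath p → (N.pathTime p : ℝ) ≤ (T : ℝ) / 2)
    (y : List A → ℝ) (hy : N.IsDecomposition y) :
    N.trPeakCost y (T : ℝ) =
      (∑ a : A, (N.c a : ℝ) * (N.τ a : ℝ) * N.staticOf y a) ∧
    N.costAt (N.trRate y (T : ℝ)) ((T / 2 : ℕ) : ℝ) = N.trPeakCost y (T : ℝ) := by
  have hattain : N.costAt (N.trRate y T) ((T / 2 : ℕ) : ℝ) =
      ∑ a : A, (N.c a : ℝ) * (N.τ a : ℝ) * N.staticOf y a := by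
    refine costAt_trRate_eq hy fun p hp => ?_
    have hp2 : 2 * N.pathTime p ≤ T := by
      have := hlong p (hy.2.1 p hp)
      exact_mod_cast (by linarith : (2 * N.pathTime p : ℝ) ≤ T)
    constructor <;> norm_cast <;> omega
  have hpeak : N.trPeakCost y T = ∑ a : A, (N.c a : ℝ) * (N.τ a : ℝ) * N.staticOf y a := by
    rw [← hattain]
    rcases Nat.eq_zero_or_pos T with rfl | hT
    · -- `Ico 0 0 = ∅` and `sSup ∅ = 0`, while the TR flow with horizon `0` vanishes.
      simp [trPeakCost, peakCost, costAt, trRate_eq_zero_of_nonpos]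
    · have hmid : ((T / 2 : ℕ) : ℝ) ∈ Set.Ico 0 (T : ℝ) :=
        ⟨Nat.cast_nonneg _, by exact_mod_cast Nat.div_lt_self hT one_lt_two⟩
      refine IsGreatest.csSup_eq ⟨Set.mem_image_of_mem _ hmid, ?_⟩
      rintro _ ⟨θ, -, rfl⟩
      rw [hattain]
      exact costAt_trRate_le hy T θ
  exact ⟨hpeak, hattain.trans hpeak.symm⟩

/-- Lemma 5.1: if the time horizon `T` is long, i.e. every `s`-`t`
path has transit time at most `T/2`, then every temporally repeated flow with
horizon `T` induced by a decomposition `y` of a static flow `x` has peak cost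
`Σ_a c_a·τ_a·x(a)`, attained at the time point `⌊T/2⌋`. -/
theorem stmt13 {V A : Type} [DecidableEq V] [DecidableEq A] [Fintype A]
    (N : Network V A) (T : ℕ)
    (hlong : ∀ p, N.IsSTPath p → (N.pathTime p : ℝ) ≤ (T : ℝ) / 2)
    (y : List A → ℝ) (hy : N.IsDecomposition y) :
    N.trPeakCost y (T : ℝ) =
      (∑ a : A, (N.c a : ℝ) * (N.τ a : ℝ) * N.staticOf y a) ∧
    N.costAt (N.trRate y (T : ℝ)) ((T / 2 : ℕ) : ℝ) = N.trPeakCost y (T : ℝ) :=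
  stmt13_general N T hlong y hy
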